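/- Let M be an R-module having the descending chain condition on socle submodules (every descending chain of socle submodules of M stabilizes). Then Spec^s(M), with the second classical Zariski topology, is a spectral space; that is, it is a T0-space, it is quasi-compact, its quasi-compact open subsets are closed under finite intersections and form an open basis, and every irreducible closed subset has a generic point. -/

import Mathlib

/-! Under dcc on socle submodules `Spec^s(M)` is a Noetherian space, i.e. every subset is
compact. By Alexander's subbasis theorem it suffices to refine covers by sets `W^s(N)`; among the
socles of the finite meets of the `N` involved take a minimal one, `soc(N₁ ⊓ ⋯ ⊓ Nₖ)`. It lies
below every `N` of the cover, so a second submodule outside all `W^s(Nᵢ)` would lie outside the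
whole cover. This settles quasi-compactness and both conditions on quasi-compact opens.

Without any chain condition, the closure of a point `S` is `V^{s*}(S)`, which gives T0, and the
sum of the members of an irreducible closed set `Y` is again second (irreducibility forces
`Y ⊆ V^{s*}(ker r)` or `Y ⊆ V^{s*}(r • ΣY)`) and is a generic point of `Y`. -/

open Pointwise

variable (R M : Type*) [CommRing R] [AddCommGroup M] [Module R M]

/-- A nonzero submodule `S` is *second* if for every `r : R`, `r • S = S` or `r • S = ⊥`. -/
def IsSecondSubmodule (S : Submodule R M) : Prop :=
  S ≠ ⊥ ∧ ∀ r : R, r • S = S ∨ r • S = ⊥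

/-- The second spectrum of `M`: the collection of all second submodules of `M`. -/
def SecondSpec : Type _ := {S : Submodule R M // IsSecondSubmodule R M S}

/-- `V^{s*}(N)`: the set of second submodules contained in `N`. -/
def Vs (N : Submodule R M) : Set (SecondSpec R M) := {S | S.1 ≤ N}

/-- `W^s(N)`: the complement of `V^{s*}(N)` in `Spec^s(M)`. -/
def Ws (N : Submodule R M) : Set (SecondSpec R M) := (Vs R M N)ᶜ

/-- The second classical Zariski topology on `Spec^s(M)`, generated by the
sub-basis `{W^s(N) : N ≤ M}`. -/
instance secondZariski : TopologicalSpace (SecondSpec R M) :=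
  TopologicalSpace.generateFrom {U | ∃ N : Submodule R M, U = Ws R M N}

/-- The second socle of a submodule `N`: the sum of all second submodules of `M`
contained in `N`. -/
def secSocle (N : Submodule R M) : Submodule R M :=
  sSup {S : Submodule R M | IsSecondSubmodule R M S ∧ S ≤ N}

section SecondSpectrum

variable {R M}

open TopologicalSpace

lemma secSocle_le (N : Submodule R M) : secSocle R M N ≤ N :=
  sSup_le fun _ h => h.2

lemma le_secSocle {S N : Submodule R M} (hS : IsSecondSubmodule R M S) (h : S ≤ N) :
    S ≤ secSocle R M N :=
  le_sSup ⟨hS, h⟩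

lemma secSocle_mono {N K : Submodule R M} (h : N ≤ K) : secSocle R M N ≤ secSocle R M K :=
  sSup_le fun _ hS => le_secSocle hS.1 (hS.2.trans h)

lemma secSocle_secSocle (N : Submodule R M) : secSocle R M (secSocle R M N) = secSocle R M N :=
  le_antisymm (secSocle_le _) (sSup_le fun _ hS => le_secSocle hS.1 (le_secSocle hS.1 hS.2))

lemma wellFoundedLT_of_dcc
    (hdcc : ∀ f : ℕ → Submodule R M, (∀ n, secSocle R M (f n) = f n) →
      (∀ n, f (n + 1) ≤ f n) → ∃ n, ∀ m, n ≤ m → f m = f n) :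
    WellFoundedLT {N : Submodule R M // secSocle R M N = N} := by
  have : WellFoundedGT {N : Submodule R M // secSocle R M N = N}ᵒᵈ := by
    refine wellFoundedGT_iff_monotone_chain_condition.2 fun a => ?_
    obtain ⟨n, hn⟩ := hdcc (fun n => (OrderDual.ofDual (a n)).1) (fun n => (a n).2)
      (fun n => a.mono n.le_succ)
    exact ⟨n, fun m hm => OrderDual.ofDual.injective (Subtype.ext (hn m hm).symm)⟩
  exact this

lemma exists_finset_secSocle_inf_le [WellFoundedLT {N : Submodule R M // secSocle R M N = N}]
    (𝒩 : Set (Submodule R M)) :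
    ∃ G : Finset (Submodule R M), ↑G ⊆ 𝒩 ∧ ∀ N ∈ 𝒩, secSocle R M (G.inf id) ≤ N := by
  obtain ⟨⟨_, hsoc⟩, ⟨G, hG𝒩, rfl⟩, hmin⟩ := wellFounded_lt.has_min
    {K : {N : Submodule R M // secSocle R M N = N} |
      ∃ G : Finset (Submodule R M), ↑G ⊆ 𝒩 ∧ K.1 = secSocle R M (G.inf id)}
    ⟨⟨_, secSocle_secSocle ((∅ : Finset (Submodule R M)).inf id)⟩, ∅, by simp, rfl⟩
  refine ⟨G, hG𝒩, fun N hN => ?_⟩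
  have hle : secSocle R M ((insert N G).inf id) ≤ secSocle R M (G.inf id) :=
    secSocle_mono (Finset.inf_mono (Finset.subset_insert N G))
  have heq : secSocle R M ((insert N G).inf id) = secSocle R M (G.inf id) := by
    by_contra hne
    exact hmin ⟨_, secSocle_secSocle _⟩
      ⟨insert N G, by rw [Finset.coe_insert]; exact Set.insert_subset hN hG𝒩, rfl⟩
      (Subtype.mk_lt_mk.2 (hle.lt_of_ne hne))
  calc secSocle R M (G.inf id) = secSocle R M ((insert N G).inf id) := heq.symm
    _ ≤ (insert N G).inf id := secSocle_le _
    _ ≤ N := Finset.inf_le (Finset.mem_insert_self N G)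

lemma isClosed_Vs (N : Submodule R M) : IsClosed (Vs R M N) :=
  ⟨isOpen_generateFrom_of_mem ⟨N, rfl⟩⟩

namespace SecondSpec

lemma specializes_iff {x y : SecondSpec R M} : x ⤳ y ↔ y.1 ≤ x.1 := by
  refine ⟨fun h => h.mem_closed (isClosed_Vs x.1) (le_refl x.1), fun h => ?_⟩
  rw [specializes_iff_nhds, nhds_generateFrom, nhds_generateFrom]
  refine le_iInf₂ fun s ⟨hys, N, hs⟩ => iInf₂_le s ⟨?_, N, hs⟩
  subst hs
  exact fun hxN => hys (h.trans hxN)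

lemma closure_singleton (x : SecondSpec R M) : closure {x} = Vs R M x.1 :=
  Set.ext fun _ => specializes_iff_mem_closure.symm.trans specializes_iff

instance : T0Space (SecondSpec R M) :=
  ⟨fun _ _ h => Subtype.ext <|
    le_antisymm (specializes_iff.1 h.specializes') (specializes_iff.1 h.specializes)⟩

instance [WellFoundedLT {N : Submodule R M // secSocle R M N = N}] :
    NoetherianSpace (SecondSpec R M) := by
  refine noetherianSpace_iff_isCompact.2 fun s =>
    isCompact_generateFrom rfl fun P hP hsP => ?_
  obtain ⟨G, hG, hGle⟩ := exists_finset_secSocle_inf_le {N | Ws R M N ∈ P}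
  refine ⟨Ws R M '' G, Set.image_subset_iff.2 hG, G.finite_toSet.image _,
    fun x hx => ?_⟩
  by_contra hxG
  have hxinf : x.1 ≤ secSocle R M (G.inf id) := by
    refine le_secSocle x.2 (Finset.le_inf fun N hN => ?_)
    by_contra hxN
    exact hxG ⟨Ws R M N, ⟨N, hN, rfl⟩, hxN⟩
  obtain ⟨_, hUP, hxU⟩ := hsP hx
  obtain ⟨N, rfl⟩ := hP hUP
  exact hxU (hxinf.trans (hGle N hUP))

lemma le_sSup_val {Y : Set (SecondSpec R M)} {S : SecondSpec R M} (hS : S ∈ Y) :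
    S.1 ≤ sSup (Subtype.val '' Y) :=
  le_sSup ⟨S, hS, rfl⟩

lemma isSecondSubmodule_sSup {Y : Set (SecondSpec R M)} (hY : IsIrreducible Y) :
    IsSecondSubmodule R M (sSup (Subtype.val '' Y)) := by
  set L := sSup (Subtype.val '' Y)
  obtain ⟨⟨S₀, hS₀⟩, hpre⟩ := hY
  refine ⟨fun hL => S₀.2.1 (le_bot_iff.1 (hL ▸ le_sSup_val hS₀)), fun r => ?_⟩
  let f := DistribSMul.toLinearMap R M r
  have hcover : Y ⊆ Vs R M (LinearMap.ker f) ∪ Vs R M (r • L) := by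
    intro S hS
    rcases S.2.2 r with h | h
    · exact Or.inr (h.symm.le.trans (Submodule.map_mono (le_sSup_val hS)))
    · exact Or.inl (LinearMap.le_ker_iff_map.2 h)
  rcases isPreirreducible_iff_isClosed_union_isClosed.1 hpre _ _
    (isClosed_Vs _) (isClosed_Vs _) hcover with h | h
  · exact Or.inr (LinearMap.le_ker_iff_map.1 (sSup_le (Set.forall_mem_image.2 h)))
  · exact Or.inl (le_antisymm (Submodule.smul_le_self_of_tower r L)
      (sSup_le (Set.forall_mem_image.2 h)))

lemma mem_closure_of_forall_subset_Vs {Y : Set (SecondSpec R M)} (hY : IsIrreducible Y)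
    {x : SecondSpec R M} (hx : ∀ N, Y ⊆ Vs R M N → x ∈ Vs R M N) : x ∈ closure Y := by
  rw [mem_closure_iff]
  intro U hU hxU
  change GenerateOpen _ U at hU
  induction hU with
  | basic _ hV =>
    obtain ⟨N, rfl⟩ := hV
    by_contra hYN
    exact hxU (hx N fun S hS => not_not.1 fun hSN => hYN ⟨S, hSN, hS⟩)
  | univ => simpa using hY.nonempty
  | inter U V hU hV ihU ihV =>
    obtain ⟨a, haU, haY⟩ := ihU hxU.1
    obtain ⟨b, hbV, hbY⟩ := ihV hxU.2
    obtain ⟨c, hcY, hcU, hcV⟩ := hY.2 U V hU hV ⟨a, haY, haU⟩ ⟨b, hbY, hbV⟩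
    exact ⟨c, ⟨hcU, hcV⟩, hcY⟩
  | sUnion _ _ ih =>
    obtain ⟨V, hV, hxV⟩ := hxU
    obtain ⟨a, haV, haY⟩ := ih V hV hxV
    exact ⟨a, ⟨V, hV, haV⟩, haY⟩

instance : QuasiSober (SecondSpec R M) where
  sober {Y} hY hYc := by
    let L : SecondSpec R M := ⟨_, isSecondSubmodule_sSup hY⟩
    have hLY : L ∈ Y := hYc.closure_subset <|
      mem_closure_of_forall_subset_Vs hY fun N hN =>
        show L.1 ≤ N from sSup_le (Set.forall_mem_image.2 fun _ hS => hN hS)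
    refine ⟨L, Set.Subset.antisymm ?_ ?_⟩
    · exact hYc.closure_subset_iff.2 (Set.singleton_subset_iff.2 hLY)
    · exact fun S hS => (closure_singleton L).symm ▸ le_sSup_val hS

end SecondSpec

end SecondSpectrum

/-- Thm 3.11: if `M` has dcc on socle submodules, then `Spec^s(M)` with the second
classical Zariski topology is a spectral space (Hochster's characterization): it is T0,
quasi-compact, its quasi-compact open subsets are closed under finite intersections and
form an open basis, and every irreducible closed subset has a generic point. -/
theorem stmt19
    (hdcc : ∀ f : ℕ → Submodule R M, (∀ n, secSocle R M (f n) = f n) →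
      (∀ n, f (n + 1) ≤ f n) → ∃ n, ∀ m, n ≤ m → f m = f n) :
    T0Space (SecondSpec R M) ∧
      CompactSpace (SecondSpec R M) ∧
      (∀ U V : Set (SecondSpec R M),
        IsOpen U → IsCompact U → IsOpen V → IsCompact V → IsCompact (U ∩ V)) ∧
      TopologicalSpace.IsTopologicalBasis
        {U : Set (SecondSpec R M) | IsOpen U ∧ IsCompact U} ∧
      (∀ Y : Set (SecondSpec R M), IsIrreducible Y → IsClosed Y →
        ∃ y, Y = closure {y}) := by
  have := wellFoundedLT_of_dcc hdcc
  refine ⟨inferInstance, inferInstance,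
    fun U V _ _ _ _ => TopologicalSpace.NoetherianSpace.isCompact _, ?_, fun Y hY hYc => ?_⟩
  · simpa only [TopologicalSpace.NoetherianSpace.isCompact, and_true] using
      TopologicalSpace.isTopologicalBasis_opens
  · obtain ⟨y, hy⟩ := QuasiSober.sober hY hYc
    exact ⟨y, hy.symm⟩
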